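/- arXiv:2202.06595 — 9 statements merged into one kernel-verified Lean document; each statement's English description precedes it below -/
import Mathlib

section
/- Let F be an idempotent m×m matrix over a commutative ring A, and write det(Id_m + (T-1)·F) = Σ_{i=0}^m e_i T^i in A[T]. Then the coefficients e_0, …, e_m form a basic system of orthogonal idempotents: each e_i is idempotent, e_i·e_j = 0 for i ≠ j, and Σ e_i = 1. -/
/-!
Specialising `T` to elements `s`, `t` of a commutative `A`-algebra, idempotency of `F` gives
`(1 + (s - 1) F) (1 + (t - 1) F) = 1 + (s t - 1) F`, so `P(XY) = P(X) P(Y)` in `A[X][Y]`.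
Comparing the coefficients of `X^i Y^j` yields `e_i e_j = δ_ij e_i`, and `P(1) = det 1 = 1`
together with `deg P ≤ m` yields `∑ e_i = 1`.
-/

open Polynomial

theorem IsIdempotentElem.one_add_sub_one_smul_mul {R B : Type*} [CommRing R] [Ring B]
    [Algebra R B] {e : B} (he : IsIdempotentElem e) (s t : R) :
    (1 + (s - 1) • e) * (1 + (t - 1) • e) = 1 + (s * t - 1) • e := by
  rw [mul_add, add_mul, add_mul, smul_mul_smul_comm, he.eq]
  simp only [mul_one, one_mul]
  rw [add_assoc, ← add_assoc ((s - 1) • e), ← add_smul, ← add_smul]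
  congr 2
  ring

theorem Polynomial.coeff_mul_coeff_of_aeval_mul {A : Type*} [CommRing A] {p : A[X]}
    (hp : aeval (C X * X : A[X][X]) p = aeval (C X) p * aeval X p) (i j : ℕ) :
    p.coeff i * p.coeff j = if i = j then p.coeff i else 0 := by
  have hCX : aeval (C X : A[X][X]) p = C p := by
    rw [← algebraMap_eq, aeval_algebraMap_apply, aeval_X_left_apply]
  have hX : aeval (X : A[X][X]) p = p.map C := by
    rw [← aeval_map_algebraMap A[X], aeval_X_left_apply, algebraMap_eq]
  have hcoeff := congrArg (fun q : A[X][X] => (q.coeff j).coeff i) hp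
  simp only [hCX, hX, coeff_C_mul, coeff_map, coeff_mul_C, aeval_eq_sum_range, Algebra.smul_def,
    algebraMap_apply, algebraMap_eq, finsetSum_coeff, mul_pow, ← C_pow, apply_ite (coeff · i),
    coeff_zero, coeff_X_pow, mul_ite, mul_zero, mul_one, Finset.sum_ite_eq] at hcoeff
  rw [← hcoeff]
  split_ifs with hj hij hij
  · rw [hij]
  · rfl
  · exact (coeff_eq_zero_of_natDegree_lt (by simpa [Nat.lt_succ_iff, hij] using hj)).symm
  · rfl

namespace Matrix

variable {n A : Type*} [Fintype n] [DecidableEq n] [CommRing A]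

/-- For idempotent `F` this is the rank polynomial of the projective module `im F`. -/
noncomputable def rankPolynomial (F : Matrix n n A) : A[X] :=
  (1 + (X - 1 : A[X]) • F.map C).det

theorem aeval_rankPolynomial (F : Matrix n n A) {R : Type*} [CommRing R] [Algebra A R] (t : R) :
    aeval t F.rankPolynomial = (1 + (t - 1) • F.map (algebraMap A R)).det := by
  rw [rankPolynomial, AlgHom.map_det]
  congr 1
  ext i j
  simp [one_apply, apply_ite]

theorem eval_one_rankPolynomial (F : Matrix n n A) : F.rankPolynomial.eval 1 = 1 := by
  simpa using F.aeval_rankPolynomial (1 : A)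

theorem natDegree_rankPolynomial_le (F : Matrix n n A) :
    F.rankPolynomial.natDegree ≤ Fintype.card n := by
  have h : 1 + (X - 1 : A[X]) • F.map C = (X : A[X]) • F.map C + (1 - F).map C := by
    ext i j : 1
    simp only [add_apply, smul_apply, map_apply, one_apply, sub_apply, apply_ite, smul_eq_mul,
      map_one, map_zero, map_sub]
    ring
  rw [rankPolynomial, h]
  exact natDegree_det_X_add_C_le F (1 - F)

theorem aeval_mul_rankPolynomial {F : Matrix n n A} (hF : IsIdempotentElem F)
    {R : Type*} [CommRing R] [Algebra A R] (s t : R) :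
    aeval (s * t) F.rankPolynomial = aeval s F.rankPolynomial * aeval t F.rankPolynomial := by
  have hG : IsIdempotentElem (F.map (algebraMap A R)) := hF.map (algebraMap A R).mapMatrix
  rw [aeval_rankPolynomial, aeval_rankPolynomial, aeval_rankPolynomial, ← det_mul,
    hG.one_add_sub_one_smul_mul]

end Matrix

/-- For an idempotent `m × m` matrix `F`, the coefficients of
`P_F(T) = det(Id + (T-1)·F)` form a basic system of orthogonal idempotents. -/
theorem coeff_charlike_poly_orthogonal_idempotents {A : Type*} [CommRing A] {m : ℕ}
    (F : Matrix (Fin m) (Fin m) A) (hF : F * F = F) :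
    let P : Polynomial A :=
      ((1 : Matrix (Fin m) (Fin m) (Polynomial A)) + ((X - 1 : Polynomial A)) • F.map C).det
    (∀ i ≤ m, IsIdempotentElem (P.coeff i)) ∧
    (∀ i ≤ m, ∀ j ≤ m, i ≠ j → P.coeff i * P.coeff j = 0) ∧
    (∑ i ∈ Finset.range (m + 1), P.coeff i = 1) := by
  change let P := F.rankPolynomial; _
  intro P
  have hmul : ∀ i j, P.coeff i * P.coeff j = if i = j then P.coeff i else 0 :=
    coeff_mul_coeff_of_aeval_mul (Matrix.aeval_mul_rankPolynomial hF _ _)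
  have hdeg : P.natDegree < m + 1 := by
    simpa [Nat.lt_succ_iff] using F.natDegree_rankPolynomial_le
  have heval : P.eval 1 = 1 := F.eval_one_rankPolynomial
  refine ⟨fun i _ => (hmul i i).trans (if_pos rfl),
    fun i _ j _ hij => (hmul i j).trans (if_neg hij), ?_⟩
  simp only [eval_eq_sum_range' hdeg, one_pow, mul_one] at heval
  exact heval
end

section
/- For an idempotent matrix F over a commutative ring, the polynomial P_F(T) = det(Id + (T-1)F) satisfies P_F(T·T') = P_F(T)·P_F(T') (as polynomials in two variables) and P_F(1) = 1. -/
open Polynomial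

/-- `P_F(t) = det(Id + (t-1)·F)`, evaluated in any commutative `A`-algebra. -/
noncomputable def PF {A : Type*} [CommRing A] {m : ℕ} (F : Matrix (Fin m) (Fin m) A)
    (R : Type*) [CommRing R] [Algebra A R] (t : R) : R :=
  ((1 : Matrix (Fin m) (Fin m) R) + (t - 1) • F.map (algebraMap A R)).det

theorem IsIdempotentElem.one_add_smul_mul_one_add_smul {R S : Type*} [CommSemiring R]
    [Semiring S] [Algebra R S] {p : S} (hp : IsIdempotentElem p) (a b : R) :
    (1 + a • p) * (1 + b • p) = 1 + (a + b + a * b) • p := by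
  simp only [add_mul, mul_add, one_mul, mul_one, smul_mul_smul_comm, hp.eq, add_smul]
  abel

theorem PF_mul {A : Type*} [CommRing A] {m : ℕ} {F : Matrix (Fin m) (Fin m) A}
    (hF : IsIdempotentElem F) (R : Type*) [CommRing R] [Algebra A R] (t s : R) :
    PF F R (t * s) = PF F R t * PF F R s := by
  have hFR : IsIdempotentElem (F.map (algebraMap A R)) :=
    hF.map (algebraMap A R).mapMatrix
  rw [PF, PF, PF, ← Matrix.det_mul, hFR.one_add_smul_mul_one_add_smul]
  congr 3
  ring

theorem PF_one {A : Type*} [CommRing A] {m : ℕ} (F : Matrix (Fin m) (Fin m) A) :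
    PF F A 1 = 1 := by
  simp [PF]

/-- For an idempotent matrix `F`, we have `P_F(T·T') = P_F(T)·P_F(T')` as a polynomial
identity in two variables, and `P_F(1) = 1`. -/
theorem PF_mul_and_one {A : Type*} [CommRing A] {m : ℕ}
    (F : Matrix (Fin m) (Fin m) A) (hF : F * F = F) :
    PF F (Polynomial (Polynomial A)) (C X * X) =
      PF F (Polynomial (Polynomial A)) (C X) * PF F (Polynomial (Polynomial A)) X ∧
    PF F A 1 = 1 :=
  ⟨PF_mul hF _ (C X) X, PF_one F⟩
end

section
/- Let A ⊆ B with B a finite A-algebra. Then A ∩ B^× = A^× (an element of A invertible in B is invertible in A) and A ∩ J(B) = J(A), where J denotes the Jacobson radical. -/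
/-!
`B` is integral over `A`, so contraction maps the maximal ideals of `B` onto those of `A`
(maximality of contractions plus lying over). An element of `A` is a unit iff it avoids every
maximal ideal, and lies in the Jacobson radical iff it lies in every maximal ideal; both
conditions therefore read the same in `A` and in `B`.
-/

section IsIntegral

variable {R S : Type*} [CommRing R] [CommRing S] [Algebra R S] [Algebra.IsIntegral R S]
  [FaithfulSMul R S]

theorem Ideal.comap_image_setOf_isMaximal :
    Ideal.comap (algebraMap R S) '' {M : Ideal S | M.IsMaximal} = {m : Ideal R | m.IsMaximal} := by
  ext m
  refine ⟨?_, fun (hm : m.IsMaximal) ↦ ?_⟩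
  · rintro ⟨M, hM : M.IsMaximal, rfl⟩
    exact Ideal.isMaximal_comap_of_isIntegral_of_isMaximal M
  · obtain ⟨M, hM, hMm⟩ := Ideal.exists_maximal_ideal_liesOver_of_isIntegral (S := S) m
    exact ⟨M, hM, ((Ideal.liesOver_iff M m).mp hMm).symm⟩

theorem Ideal.comap_jacobson_bot_of_isIntegral :
    (⊥ : Ideal S).jacobson.comap (algebraMap R S) = (⊥ : Ideal R).jacobson := by
  rw [Ideal.comap_jacobson]
  simp only [Ideal.jacobson, bot_le, true_and, Ideal.comap_image_setOf_isMaximal]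

theorem isUnit_algebraMap_iff_of_isIntegral {a : R} : IsUnit (algebraMap R S a) ↔ IsUnit a := by
  rw [← Ideal.span_singleton_eq_top, ← Ideal.span_singleton_eq_top, ← Set.image_singleton,
    ← Ideal.map_span, Ideal.map_eq_top_iff _ (FaithfulSMul.algebraMap_injective R S)
    fun x ↦ Algebra.IsIntegral.isIntegral x]

end IsIntegral

/-- Let `A ⊆ B` with `B` a finite `A`-algebra. Then an element of `A` is a unit in `B` iff it
is a unit in `A`, and it lies in the Jacobson radical of `B` iff it lies in the Jacobson
radical of `A`. -/
theorem unit_and_jacobson_of_finite {B : Type*} [CommRing B] (A : Subring B)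
    [Module.Finite A B] (a : A) :
    (IsUnit (a : B) ↔ IsUnit a) ∧
    ((∀ y : B, IsUnit (1 + (a : B) * y)) ↔ (∀ y : A, IsUnit (1 + a * y))) := by
  have : Algebra.IsIntegral A B := Algebra.IsIntegral.of_finite A B
  refine ⟨isUnit_algebraMap_iff_of_isIntegral (a := a), ?_⟩
  have h := SetLike.ext_iff.mp (Ideal.comap_jacobson_bot_of_isIntegral (R := A) (S := B)) a
  simp only [Ideal.mem_comap, Ideal.mem_jacobson_bot, Algebra.algebraMap_ofSubsemiring_apply]
    at h
  simpa only [add_comm (1 : B), add_comm (1 : A)] using h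
end

section
/- Let (A, 𝔪) be a local ring and A ⊆ B a finite A-algebra. Then the Jacobson radical of B equals the radical of the ideal 𝔪·B, i.e., J(B) = √(𝔪B). -/
/-- For a local ring `(A, 𝔪)` and a finite `A`-algebra `B ⊇ A`, the Jacobson radical of `B`
is the radical of the ideal `𝔪·B`. -/
theorem jacobson_eq_radical_map_maximalIdeal {B : Type*} [CommRing B] (A : Subring B)
    [IsLocalRing A] [Module.Finite A B] :
    Ideal.jacobson (⊥ : Ideal B) =
      (Ideal.map A.subtype (IsLocalRing.maximalIdeal A)).radical := by
  have : Algebra.IsIntegral A B := Algebra.IsIntegral.of_finite A B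
  have halg : (algebraMap A B) = A.subtype := rfl
  rw [Ideal.jacobson, Ideal.radical_eq_sInf]
  congr 1
  ext m
  simp only [Set.mem_setOf_eq, bot_le, true_and]
  constructor
  · intro hm
    have hc : (m.comap (algebraMap A B)).IsMaximal :=
      Ideal.isMaximal_comap_of_isIntegral_of_isMaximal m
    have h2 : m.comap (algebraMap A B) = IsLocalRing.maximalIdeal A :=
      IsLocalRing.eq_maximalIdeal hc
    refine ⟨?_, hm.isPrime⟩
    rw [← halg, ← h2]
    exact Ideal.map_comap_le
  · rintro ⟨hle, hp⟩
    have hle' : IsLocalRing.maximalIdeal A ≤ m.comap (algebraMap A B) := by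
      rw [← Ideal.map_le_iff_le_comap, halg]; exact hle
    have hne : m.comap (algebraMap A B) ≠ ⊤ := (Ideal.comap_isPrime _ m).ne_top
    have heq : m.comap (algebraMap A B) = IsLocalRing.maximalIdeal A :=
      (IsLocalRing.maximalIdeal.isMaximal A).eq_of_le hne hle' |>.symm
    have : (m.comap (algebraMap A B)).IsMaximal := heq ▸ IsLocalRing.maximalIdeal.isMaximal A
    exact Ideal.isMaximal_of_isIntegral_of_isMaximal_comap m this
end

section
/- Let (A, 𝔪) be a local ring with residue field k, and let g, h ∈ A[X] be monic polynomials whose reductions mod 𝔪 are coprime in k[X]. Then there exist u, v ∈ A[X] with u·g + v·h = 1. -/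
open Polynomial

/-!
The ideal `I = (g, h)` of `A[X]` contains the monic `g`, so `A[X] ⧸ I` is a finite `A`-module.
Residual coprimality says `I + 𝔪 A[X] = A[X]`, i.e. `𝔪 • (A[X] ⧸ I) = A[X] ⧸ I`, and Nakayama's
lemma forces `A[X] ⧸ I = 0`.
-/

theorem Ideal.eq_top_of_sup_map_eq_top {R S : Type*} [CommRing R] [CommRing S] [Algebra R S]
    {I : Ideal S} [Module.Finite R (S ⧸ I)] {J : Ideal R} (hJ : J ≤ (⊥ : Ideal R).jacobson)
    (hIJ : I ⊔ J.map (algebraMap R S) = ⊤) : I = ⊤ := by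
  let π := (Ideal.Quotient.mkₐ R I).toLinearMap
  have htop : (⊤ : Submodule R (S ⧸ I)) ≤ J • ⊤ := by
    rintro x -
    obtain ⟨s, rfl⟩ := Ideal.Quotient.mk_surjective x
    obtain ⟨i, hi, t, ht, rfl⟩ := Submodule.mem_sup.mp (hIJ ▸ Submodule.mem_top : s ∈ I ⊔ _)
    have ht' : t ∈ J • (⊤ : Submodule R S) := by rwa [Ideal.smul_top_eq_map]
    have hπt : π t ∈ J • Submodule.map π ⊤ := Submodule.map_smul'' J ⊤ π ▸ ⟨t, ht', rfl⟩
    have hπs : π (i + t) = π t := by simp [π, Ideal.Quotient.eq_zero_iff_mem.mpr hi]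
    exact hπs ▸ Submodule.smul_mono le_rfl le_top hπt
  have hbot := Submodule.eq_bot_of_le_smul_of_le_jacobson_bot J ⊤ Module.Finite.fg_top htop hJ
  rw [← Ideal.Quotient.subsingleton_iff, ← Submodule.subsingleton_iff R]
  exact subsingleton_iff_bot_eq_top.mp hbot.symm

theorem Polynomial.finite_quotient_of_monic_mem {R : Type*} [CommRing R] {I : Ideal R[X]}
    {g : R[X]} (hg : g.Monic) (hgI : g ∈ I) : Module.Finite R (R[X] ⧸ I) :=
  have : Module.Finite R (R[X] ⧸ Ideal.span {g}) := hg.finite_adjoinRoot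
  have hle : Ideal.span {g} ≤ I := (Ideal.span_singleton_le_iff_mem I).mpr hgI
  Module.Finite.of_surjective (Ideal.Quotient.factorₐ R hle).toLinearMap
    (Ideal.Quotient.factor_surjective hle)

theorem Polynomial.span_pair_sup_map_C_eq_top {R : Type*} [CommRing R] {J : Ideal R}
    {g h : R[X]} (hcop : IsCoprime (g.map (Ideal.Quotient.mk J)) (h.map (Ideal.Quotient.mk J))) :
    Ideal.span {g, h} ⊔ J.map C = ⊤ := by
  have hsurj := map_surjective _ (Ideal.Quotient.mk_surjective (I := J))
  rw [← Ideal.mk_ker (I := J), ← ker_mapRingHom, ← Ideal.comap_map_of_surjective' _ hsurj,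
    Ideal.map_span, Set.image_pair, coe_mapRingHom,
    (Ideal.eq_top_iff_one _).mpr (Ideal.mem_span_pair.mpr hcop), Ideal.comap_top]

theorem bezout_of_residually_coprime_general {A : Type*} [CommRing A] [IsLocalRing A]
    (g h : Polynomial A) (hg : g.Monic)
    (hcop : IsCoprime (g.map (Ideal.Quotient.mk (IsLocalRing.maximalIdeal A)))
      (h.map (Ideal.Quotient.mk (IsLocalRing.maximalIdeal A)))) :
    ∃ u v : Polynomial A, u * g + v * h = 1 := by
  have := finite_quotient_of_monic_mem hg (Ideal.subset_span (Set.mem_insert g {h}))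
  have hI : Ideal.span {g, h} = ⊤ := Ideal.eq_top_of_sup_map_eq_top
    (IsLocalRing.maximalIdeal_le_jacobson ⊥) (span_pair_sup_map_C_eq_top hcop)
  exact Ideal.mem_span_pair.mp (hI ▸ Submodule.mem_top)

/-- Over a local ring `(A, 𝔪)`, if `g, h` are monic and their reductions mod `𝔪` are coprime
in `(A/𝔪)[X]`, then there exist `u, v` with `u·g + v·h = 1`. -/
theorem bezout_of_residually_coprime {A : Type*} [CommRing A] [IsLocalRing A]
    (g h : Polynomial A) (hg : g.Monic) (hh : h.Monic)
    (hcop : IsCoprime (g.map (Ideal.Quotient.mk (IsLocalRing.maximalIdeal A)))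
      (h.map (Ideal.Quotient.mk (IsLocalRing.maximalIdeal A)))) :
    ∃ u v : Polynomial A, u * g + v * h = 1 :=
  bezout_of_residually_coprime_general g h hg hcop
end

section
/- Let (A,𝔪) be a local ring, f ∈ A[X] monic, B = A[X]/(f) = A[x]. If f = g·h with g, h monic and the reductions ḡ, h̄ coprime in (A/𝔪)[X], then writing u·g + v·h = 1 in A[X], the element e = u(x)·g(x) is an idempotent of B, and the ideals ⟨g(x)⟩ and ⟨e⟩ of B coincide. -/
open Polynomial

/-- Let `(A, 𝔪)` be local, `f` monic, `B = A[X]/(f)`. If `f = g·h` with `g, h` monic and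
residually coprime, and `u·g + v·h = 1`, then `e = u(x)·g(x)` is an idempotent of `B`
and `⟨g(x)⟩ = ⟨e⟩` in `B`. -/
theorem idempotent_from_factorization {A : Type*} [CommRing A] [IsLocalRing A]
    (f g h u v : Polynomial A) (hf : f.Monic) (hg : g.Monic) (hh : h.Monic)
    (hfactor : f = g * h)
    (hcop : IsCoprime (g.map (Ideal.Quotient.mk (IsLocalRing.maximalIdeal A)))
      (h.map (Ideal.Quotient.mk (IsLocalRing.maximalIdeal A))))
    (huv : u * g + v * h = 1) :
    IsIdempotentElem (Ideal.Quotient.mk (Ideal.span {f}) (u * g)) ∧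
    Ideal.span {Ideal.Quotient.mk (Ideal.span {f}) g} =
      Ideal.span {Ideal.Quotient.mk (Ideal.span {f}) (u * g)} := by

  set π := Ideal.Quotient.mk (Ideal.span {f})
  have key : ∀ p : Polynomial A, f ∣ p → π p = 0 := fun p hp =>
    Ideal.Quotient.eq_zero_iff_mem.mpr (Ideal.mem_span_singleton.mpr hp)
  have h1 : π (u * g) * π (u * g) = π (u * g) := by
    have : π ((u * g) * (u * g) - u * g) = 0 := by
      apply key
      have : (u * g) * (u * g) - u * g = -(u * v) * f := by
        have := huv
        rw [hfactor]; linear_combination (u * g) * huv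
      rw [this]; exact Dvd.intro _ (mul_comm _ _)
    rw [map_sub, sub_eq_zero, map_mul] at this
    simpa [map_mul] using this
  refine ⟨h1, le_antisymm ?_ ?_⟩
  · rw [Ideal.span_singleton_le_span_singleton]
    refine ⟨π g, ?_⟩
    rw [← map_mul]
    have : π (g - u * g * g) = 0 := by
      apply key
      have : g - u * g * g = v * f := by rw [hfactor]; linear_combination (-g) * huv
      rw [this]; exact Dvd.intro _ (mul_comm _ _)
    rw [map_sub, sub_eq_zero] at this
    exact this
  · rw [Ideal.span_singleton_le_span_singleton, map_mul]
    exact dvd_mul_left _ _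
end

section
/- Let A be a commutative ring whose only idempotents are 0 and 1, f a monic polynomial of degree n over A, and D = A[X_1,…,X_n]/(S_i - (-1)^i a_i) its universal decomposition algebra with the natural action of the symmetric group S_n permuting the x_i. Then every idempotent e ∈ D fixed by the action of S_n belongs to (the image of) A. -/
open MvPolynomial

/-- Let `A` be a commutative ring whose only idempotents are `0` and `1`, and let
`f(T) = T^n + a_1 T^{n-1} + … + a_n` be monic of degree `n`. In the universal decomposition
algebra `D = A[X_1,…,X_n]/(S_i - (-1)^i a_i)`, every idempotent fixed by the action of the
symmetric group (permuting the variables) belongs to the image of `A`. -/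
theorem idempotent_fixed_by_symm_mem_base {A : Type*} [CommRing A]
    (hA : ∀ e : A, IsIdempotentElem e → e = 0 ∨ e = 1)
    (n : ℕ) (f : Polynomial A) (hf : f.Monic) (hdeg : f.natDegree = n) :
    let I : Ideal (MvPolynomial (Fin n) A) :=
      Ideal.span (Set.range fun i : Fin n =>
        esymm (Fin n) A ((i : ℕ) + 1) -
          C ((-1 : A) ^ ((i : ℕ) + 1) * f.coeff (n - ((i : ℕ) + 1))))
    ∀ E : MvPolynomial (Fin n) A,
      IsIdempotentElem (Ideal.Quotient.mk I E) →
      (∀ σ : Equiv.Perm (Fin n),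
        Ideal.Quotient.mk I (rename σ E) = Ideal.Quotient.mk I E) →
      ∃ a : A, Ideal.Quotient.mk I E = Ideal.Quotient.mk I (C a) := by
  intro I E hE hsym
  classical
  -- the symmetrized product
  set S : MvPolynomial (Fin n) A := ∏ σ : Equiv.Perm (Fin n), rename σ E with hSdef
  -- its class in the quotient is the class of `E`
  have hmkS : Ideal.Quotient.mk I S = Ideal.Quotient.mk I E := by
    rw [hSdef, map_prod]
    simp_rw [hsym]
    rw [Finset.prod_const, Finset.card_univ]
    obtain ⟨k, hk⟩ := Nat.exists_eq_succ_of_ne_zero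
      (Fintype.card_pos (α := Equiv.Perm (Fin n))).ne'
    rw [hk]
    exact hE.pow_succ_eq k
  -- `S` is a symmetric polynomial
  have hSsymm : S.IsSymmetric := by
    intro τ
    rw [hSdef, map_prod]
    simp_rw [rename_rename]
    exact Fintype.prod_equiv (Equiv.mulLeft τ) _ _ (fun σ => by
      rw [Equiv.coe_mulLeft, ← Equiv.Perm.coe_mul])
  -- fundamental theorem of symmetric polynomials
  obtain ⟨q, hq⟩ := esymmAlgHom_surjective (σ := Fin n) (R := A) (n := n)
    (by simp) ⟨S, hSsymm⟩
  have hq' : aeval (fun i : Fin n => esymm (Fin n) A ((i : ℕ) + 1)) q = S := by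
    have := congrArg Subtype.val hq
    rwa [esymmAlgHom_apply] at this
  -- the constants that the elementary symmetric polynomials are congruent to
  set c : Fin n → A := fun i => (-1 : A) ^ ((i : ℕ) + 1) * f.coeff (n - ((i : ℕ) + 1)) with hc
  have hesymm : ∀ i : Fin n,
      Ideal.Quotient.mk I (esymm (Fin n) A ((i : ℕ) + 1)) = Ideal.Quotient.mk I (C (c i)) := by
    intro i
    rw [Ideal.Quotient.eq]
    exact Ideal.subset_span ⟨i, rfl⟩
  refine ⟨aeval c q, ?_⟩
  have hmkalg : ∀ p : MvPolynomial (Fin n) A,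
      Ideal.Quotient.mk I p = Ideal.Quotient.mkₐ A I p := fun _ => rfl
  calc Ideal.Quotient.mk I E = Ideal.Quotient.mk I S := hmkS.symm
    _ = Ideal.Quotient.mkₐ A I (aeval (fun i : Fin n => esymm (Fin n) A ((i : ℕ) + 1)) q) := by
        rw [hq']; rfl
    _ = aeval (fun i : Fin n =>
          Ideal.Quotient.mkₐ A I (esymm (Fin n) A ((i : ℕ) + 1))) q := by
        rw [comp_aeval_apply]
    _ = aeval (fun i : Fin n => algebraMap A _ (c i)) q := by
        have hfun : (fun i : Fin n => Ideal.Quotient.mkₐ A I (esymm (Fin n) A ((i : ℕ) + 1)))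
            = fun i : Fin n => algebraMap A (MvPolynomial (Fin n) A ⧸ I) (c i) := by
          funext i
          rw [← hmkalg, hesymm i, hmkalg, ← MvPolynomial.algebraMap_eq,
            (Ideal.Quotient.mkₐ A I).commutes]
        rw [hfun]
    _ = algebraMap A _ (aeval c q) := by
        rw [show (algebraMap A (MvPolynomial (Fin n) A ⧸ I)) ((aeval c) q)
            = (Algebra.ofId A _) ((aeval c) q) from rfl, comp_aeval_apply]
        rfl
    _ = Ideal.Quotient.mk I (C (aeval c q)) := by
        rw [← MvPolynomial.algebraMap_eq, hmkalg, (Ideal.Quotient.mkₐ A I).commutes]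
end

section
/- Let (A, 𝔪) be a Henselian local ring with residue field k (every monic polynomial X^n + … + a_1 X + a_0 with a_1 a unit and a_0 ∈ 𝔪 has a root in 𝔪). Then every polynomial f(X) = a_n X^n + … + a_1 X + a_0 ∈ A[X] (not necessarily monic) with a_1 ∈ A^× and a_0 ∈ 𝔪 has a unique root in 𝔪. -/
/-!
Substituting `X = a₀ Y` gives `f (a₀ Y) = a₀ k(Y)` with `k ≡ 1 + a₁ Y` modulo `𝔪`. With
`n = deg k`, the reflection `K = Y ^ (n + 2) k(1 / Y)` is monic and reduces to
`Y ^ (n + 1) (Y + a₁)`, which has the simple root `-a₁` in the residue field. Henselianity lifts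
it to a root `v` of `K`, a unit, so `v⁻¹` is a root of `k` and `a₀ v⁻¹ ∈ 𝔪` is a root of `f`.
Uniqueness holds because `f'` is a unit on `𝔪`.
-/

open Polynomial IsLocalRing

theorem HenselianLocalRing.of_exists_root_of_isUnit_coeff_one {A : Type*} [CommRing A]
    [IsLocalRing A]
    (h : ∀ f : A[X], f.Monic → IsUnit (f.coeff 1) → f.coeff 0 ∈ maximalIdeal A →
      ∃ α ∈ maximalIdeal A, f.eval α = 0) :
    HenselianLocalRing A where
  is_henselian f hf a₀ h₀ h₁ := by
    obtain ⟨t, ht, hroot⟩ := h (taylor a₀ f) (taylor_apply a₀ f ▸ hf.comp_X_add_C a₀)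
      (taylor_coeff_one a₀ f ▸ h₁) (taylor_coeff_zero a₀ f ▸ h₀)
    exact ⟨t + a₀, (taylor_eval a₀ f t).symm.trans hroot, by rwa [add_sub_cancel_right]⟩

namespace Polynomial

variable {A : Type*} [CommRing A]

theorem eq_of_isUnit_coeff_one_of_eval_eq_zero [IsLocalRing A] {f : A[X]}
    (h₁ : IsUnit (f.coeff 1)) {α β : A} (hα : α ∈ maximalIdeal A) (hβ : β ∈ maximalIdeal A)
    (hfα : f.eval α = 0) (hfβ : f.eval β = 0) : α = β := by
  obtain ⟨c, hc⟩ := binomExpansion f β (α - β)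
  rw [add_sub_cancel, hfα, hfβ] at hc
  have hunit : IsUnit (f.derivative.eval β + c * (α - β)) := by
    rw [← residue_ne_zero_iff_isUnit] at h₁ ⊢
    rw [map_add, map_mul, (residue_eq_zero_iff _).mpr (sub_mem hα hβ), mul_zero, add_zero,
      ← eval_map_apply, (residue_eq_zero_iff β).mpr hβ, ← coeff_zero_eq_eval_zero, coeff_map,
      coeff_derivative]
    simpa using h₁
  exact sub_eq_zero.mp (hunit.mul_left_eq_zero.mp (by linear_combination -hc))

theorem exists_eval_eq_zero_of_map_residue_eq [HenselianLocalRing A] {p : A[X]}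
    (hp₀ : p.coeff 0 = 1) {u : ResidueField A} (hu : u ≠ 0)
    (hp : p.map (residue A) = 1 + C u * X) : ∃ w, p.eval w = 0 := by
  set n := p.natDegree
  have hmonic : (reflect (n + 2) p).Monic :=
    monic_of_natDegree_le_of_coeff_eq_one (n + 2) (natDegree_reflect_le.trans (by omega))
      (by rw [coeff_reflect, revAt_le le_rfl, Nat.sub_self, hp₀])
  have hmap : (reflect (n + 2) p).map (residue A) = X ^ (n + 1) * (X + C u) := by
    have hX : reflect (n + 2) (X : (ResidueField A)[X]) = X ^ (n + 1) := by
      simpa [revAt_le] using reflect_monomial (R := ResidueField A) (n + 2) 1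
    rw [← reflect_map, hp, reflect_add, reflect_one, reflect_C_mul, hX]
    ring
  have lift_simple_root := ((HenselianLocalRing.TFAE A).out 0 1).mp ‹_›
  obtain ⟨v, hv, hvu⟩ := lift_simple_root _ hmonic (-u)
    (by rw [aeval_def, ResidueField.algebraMap_eq, ← eval_map, hmap]; simp)
    (by rw [aeval_def, ResidueField.algebraMap_eq, ← eval_map, ← derivative_map, hmap]; simp [hu])
  have := (residue_ne_zero_iff_isUnit v).mp (hvu ▸ neg_ne_zero.mpr hu) |>.invertible
  refine ⟨⅟v, (eval₂_reflect_eq_zero_iff (RingHom.id A) (⅟v) (n + 2) p (by omega)).mp ?_⟩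
  rwa [invOf_invOf]

noncomputable def rescaleByCoeffZero (f : A[X]) : A[X] :=
  1 + X * f.divX.comp (C (f.coeff 0) * X)

theorem coeff_zero_rescaleByCoeffZero (f : A[X]) : f.rescaleByCoeffZero.coeff 0 = 1 := by
  simp [rescaleByCoeffZero]

theorem coeff_succ_rescaleByCoeffZero (f : A[X]) (i : ℕ) :
    f.rescaleByCoeffZero.coeff (i + 1) = f.coeff (i + 1) * f.coeff 0 ^ i := by
  simp [rescaleByCoeffZero, coeff_one, coeff_divX]

theorem eval_coeff_zero_mul (f : A[X]) (w : A) :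
    f.eval (f.coeff 0 * w) = f.coeff 0 * f.rescaleByCoeffZero.eval w := by
  have hf := congrArg (eval (f.coeff 0 * w)) (X_mul_divX_add f)
  simp only [eval_add, eval_mul, eval_X, eval_C] at hf
  simp only [rescaleByCoeffZero, eval_add, eval_one, eval_mul, eval_X, eval_comp, eval_C]
  linear_combination -hf

theorem map_residue_rescaleByCoeffZero [IsLocalRing A] {f : A[X]}
    (h₀ : f.coeff 0 ∈ maximalIdeal A) :
    f.rescaleByCoeffZero.map (residue A) = 1 + C (residue A (f.coeff 1)) * X := by
  ext (_ | _ | i)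
  · simp [coeff_zero_rescaleByCoeffZero]
  · simp [coeff_succ_rescaleByCoeffZero, coeff_one]
  · simp [coeff_succ_rescaleByCoeffZero, coeff_one, (residue_eq_zero_iff _).mpr h₀]

theorem exists_eval_eq_zero_of_isUnit_coeff_one [HenselianLocalRing A] {f : A[X]}
    (h₁ : IsUnit (f.coeff 1)) (h₀ : f.coeff 0 ∈ maximalIdeal A) :
    ∃ α ∈ maximalIdeal A, f.eval α = 0 := by
  obtain ⟨w, hw⟩ := exists_eval_eq_zero_of_map_residue_eq (coeff_zero_rescaleByCoeffZero f)
    ((residue_ne_zero_iff_isUnit _).mpr h₁) (map_residue_rescaleByCoeffZero h₀)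
  exact ⟨f.coeff 0 * w, Ideal.mul_mem_right _ _ h₀, by rw [eval_coeff_zero_mul, hw, mul_zero]⟩

end Polynomial

/-- Over a Henselian local ring `(A, 𝔪)` (every monic polynomial with linear coefficient a
unit and constant coefficient in `𝔪` has a root in `𝔪`), every polynomial (not necessarily
monic) with linear coefficient a unit and constant coefficient in `𝔪` has a unique root
in `𝔪`. -/
theorem hensel_nonmonic {A : Type*} [CommRing A] [IsLocalRing A]
    (hHensel : ∀ f : Polynomial A, f.Monic → IsUnit (f.coeff 1) →
      f.coeff 0 ∈ IsLocalRing.maximalIdeal A →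
      ∃ α ∈ IsLocalRing.maximalIdeal A, f.eval α = 0)
    (f : Polynomial A) (h1 : IsUnit (f.coeff 1))
    (h0 : f.coeff 0 ∈ IsLocalRing.maximalIdeal A) :
    ∃! α : A, α ∈ IsLocalRing.maximalIdeal A ∧ f.eval α = 0 := by
  have := HenselianLocalRing.of_exists_root_of_isUnit_coeff_one hHensel
  obtain ⟨α, hα, hfα⟩ := exists_eval_eq_zero_of_isUnit_coeff_one h1 h0
  exact ⟨α, ⟨hα, hfα⟩, fun β ⟨hβ, hfβ⟩ => eq_of_isUnit_coeff_one_of_eval_eq_zero h1 hβ hα hfβ hfα⟩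
end

section
/- Let (A, 𝔪) be a Henselian local ring with residue field k, and f ∈ A[X] such that its reduction f̄ ∈ k[X] has a simple root a ∈ k (i.e., f̄(a) = 0 and f̄'(a) ≠ 0). Then there exists a unique root α ∈ A of f with ᾱ = a. -/
open Polynomial

open IsLocalRing in
/-- Key lemma: the Hensel property for monic polynomials with unit linear coefficient
implies root-finding for arbitrary polynomials `g` with `g.coeff 0 ∈ 𝔪` and `g.coeff 1` a unit. -/
theorem hensel_key {A : Type*} [CommRing A] [IsLocalRing A]
    (hHensel : ∀ f : Polynomial A, f.Monic → IsUnit (f.coeff 1) →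
      f.coeff 0 ∈ IsLocalRing.maximalIdeal A →
      ∃ α ∈ IsLocalRing.maximalIdeal A, f.eval α = 0)
    (g : Polynomial A) (h0 : g.coeff 0 ∈ maximalIdeal A) (h1 : IsUnit (g.coeff 1)) :
    ∃ ε ∈ maximalIdeal A, g.eval ε = 0 := by
  classical
  set φ := residue A with hφ
  have hφ0 : φ (g.coeff 0) = 0 := Ideal.Quotient.eq_zero_iff_mem.2 h0
  have hφ1 : φ (g.coeff 1) ≠ 0 := by
    have : IsUnit (φ (g.coeff 1)) := h1.map φ
    exact this.ne_zero
  have hg1 : g.coeff 1 ≠ 0 := fun h => hφ1 (by rw [h, map_zero])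
  have hn : 1 ≤ g.natDegree := le_natDegree_of_ne_zero hg1
  obtain ⟨m, hm⟩ : ∃ m, g.natDegree = m + 1 := ⟨g.natDegree - 1, by omega⟩
  set c0 := g.coeff 0 with hc0
  set c1 := g.coeff 1 with hc1
  set q : Polynomial A :=
    X ^ (m + 1) + ∑ j ∈ Finset.range (m + 1), C (g.coeff (j + 1) * c0 ^ j) * X ^ (m - j)
    with hq
  have hqmonic : q.Monic := by
    apply monic_X_pow_add
    refine lt_of_le_of_lt (degree_sum_le _ _) ?_
    rw [Finset.sup_lt_iff (by exact_mod_cast WithBot.bot_lt_coe (m + 1))]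
    intro j hj
    refine lt_of_le_of_lt (degree_C_mul_X_pow_le _ _) ?_
    exact_mod_cast Nat.lt_succ_of_le (Nat.sub_le m j)
  have hqmap : q.map φ = X ^ m * (X + C (φ c1)) := by
    rw [hq, Polynomial.map_add, Polynomial.map_pow, map_X, Polynomial.map_sum,
      Finset.sum_range_succ']
    have h2 : ∀ j ∈ Finset.range m,
        (C (g.coeff (j + 1 + 1) * c0 ^ (j + 1)) * X ^ (m - (j + 1))).map φ = 0 := by
      intro j _
      rw [Polynomial.map_mul, map_C, map_mul, map_pow, hφ0]
      simp
    rw [Finset.sum_congr rfl h2]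
    simp only [Finset.sum_const, smul_zero, zero_add, Polynomial.map_mul, map_C, map_mul,
      map_pow, Polynomial.map_pow, map_X, Polynomial.map_X, pow_zero, mul_one, Nat.sub_zero]
    ring
  set r : Polynomial A := q.comp (X + C (-c1)) with hr
  have hrmonic : r.Monic := hqmonic.comp_X_add_C (-c1)
  have hr0 : r.coeff 0 = q.eval (-c1) := by
    rw [Polynomial.coeff_zero_eq_eval_zero, hr, eval_comp]
    simp
  have hr1 : r.coeff 1 = (derivative q).eval (-c1) := by
    have h6 : (derivative r).coeff 0 = r.coeff 1 := by
      rw [Polynomial.coeff_derivative]; simp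
    rw [← h6, Polynomial.coeff_zero_eq_eval_zero, hr, derivative_comp]
    simp [eval_comp]
  have hmem : r.coeff 0 ∈ maximalIdeal A := by
    have hval : φ (q.eval (-c1)) = 0 := by
      rw [show φ (q.eval (-c1)) = (q.map φ).eval (φ (-c1)) by
        rw [Polynomial.eval_map, Polynomial.eval₂_at_apply], hqmap]
      simp
    rw [hr0]
    exact Ideal.Quotient.eq_zero_iff_mem.1 hval
  have hunit : IsUnit (r.coeff 1) := by
    rw [hr1]
    have hval : φ ((derivative q).eval (-c1)) = (-(φ c1)) ^ m := by
      have h3 : φ ((derivative q).eval (-c1)) = ((derivative q).map φ).eval (φ (-c1)) := by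
        rw [Polynomial.eval_map, Polynomial.eval₂_at_apply]
      rw [h3, ← derivative_map, hqmap, derivative_mul, derivative_add, derivative_X, derivative_C]
      simp [mul_comm]
    have : φ ((derivative q).eval (-c1)) ≠ 0 := by
      rw [hval]
      exact pow_ne_zero _ (neg_ne_zero.2 hφ1)
    by_contra h
    exact this (Ideal.Quotient.eq_zero_iff_mem.2 ((mem_maximalIdeal _).2 h))
  obtain ⟨w, hw, hwroot⟩ := hHensel r hrmonic hunit hmem
  set s := w - c1 with hs
  have hqs : q.eval s = 0 := by
    rw [← hwroot, hr, eval_comp]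
    simp [hs, sub_eq_add_neg]
  have hφw : φ w = 0 := Ideal.Quotient.eq_zero_iff_mem.2 hw
  have hsunit : IsUnit s := by
    by_contra h
    have h8 : φ s = 0 := Ideal.Quotient.eq_zero_iff_mem.2 ((mem_maximalIdeal _).2 h)
    rw [hs, map_sub, hφw, zero_sub, neg_eq_zero] at h8
    exact hφ1 h8
  obtain ⟨u, hu⟩ := hsunit
  refine ⟨c0 * ↑u⁻¹, Ideal.mul_mem_right _ _ h0, ?_⟩
  have hpow : ∀ j ∈ Finset.range (m + 2), (↑u⁻¹ : A) ^ j * s ^ (m + 1) = s ^ (m + 1 - j) := by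
    intro j hj
    rw [Finset.mem_range] at hj
    have h4 : m + 1 = (m + 1 - j) + j := by omega
    rw [h4, pow_add, ← mul_assoc, mul_comm ((↑u⁻¹ : A) ^ j), mul_assoc, ← mul_pow]
    have : s ^ (m + 1 - j) * ((↑u⁻¹ : A) * s) ^ j = s ^ (m + 1 - j) * 1 ^ j := by
      rw [← hu, Units.inv_mul]
    simpa using this
  have hkey : s ^ (m + 1) * g.eval (c0 * ↑u⁻¹) = c0 * q.eval s := by
    rw [eval_eq_sum_range, hm, Finset.mul_sum]
    have h5 : ∀ j ∈ Finset.range (m + 2),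
        s ^ (m + 1) * (g.coeff j * (c0 * ↑u⁻¹) ^ j)
          = g.coeff j * c0 ^ j * s ^ (m + 1 - j) := by
      intro j hj
      rw [← hpow j hj, mul_pow]
      ring
    rw [Finset.sum_congr rfl h5, Finset.sum_range_succ']
    have h10 : c0 * q.eval s
        = c0 * s ^ (m + 1) + ∑ j ∈ Finset.range (m + 1),
            g.coeff (j + 1) * c0 ^ (j + 1) * s ^ (m - j) := by
      rw [hq, eval_add, eval_pow, eval_X, eval_finset_sum, mul_add, Finset.mul_sum]
      congr 1
      refine Finset.sum_congr rfl fun j _ => ?_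
      simp only [eval_mul, eval_pow, eval_C, eval_X]
      ring
    rw [h10]
    simp only [Nat.succ_sub_succ_eq_sub, pow_zero, mul_one, Nat.sub_zero, ← hc0]
    ring
  rw [hqs, mul_zero] at hkey
  have hspow : IsUnit (s ^ (m + 1)) := (hu ▸ u.isUnit).pow _
  obtain ⟨v, hv⟩ := hspow
  have := congrArg (fun x => (↑v⁻¹ : A) * x) hkey
  simpa [← hv, ← mul_assoc] using this

/-- Over a Henselian local ring `(A, 𝔪)` with residue field `k`, if the reduction of
`f ∈ A[X]` has a simple root `a ∈ k`, then `f` has a unique root `α ∈ A` lifting `a`. -/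
theorem hensel_simple_root_lift {A : Type*} [CommRing A] [IsLocalRing A]
    (hHensel : ∀ f : Polynomial A, f.Monic → IsUnit (f.coeff 1) →
      f.coeff 0 ∈ IsLocalRing.maximalIdeal A →
      ∃ α ∈ IsLocalRing.maximalIdeal A, f.eval α = 0)
    (f : Polynomial A) (a : IsLocalRing.ResidueField A)
    (ha : (f.map (IsLocalRing.residue A)).eval a = 0)
    (ha' : (derivative (f.map (IsLocalRing.residue A))).eval a ≠ 0) :
    ∃! α : A, f.eval α = 0 ∧ IsLocalRing.residue A α = a := by
  classical
  set φ := IsLocalRing.residue A with hφ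
  obtain ⟨a₀, rfl⟩ : ∃ a₀ : A, φ a₀ = a := Ideal.Quotient.mk_surjective a
  -- the derivative of f is a unit at any point with residue a
  have hder : ∀ x : A, φ x = φ a₀ → IsUnit ((derivative f).eval x) := by
    intro x hx
    have : φ ((derivative f).eval x) ≠ 0 := by
      rw [show φ ((derivative f).eval x) = ((derivative f).map φ).eval (φ x) by
        rw [Polynomial.eval_map, Polynomial.eval₂_at_apply], ← derivative_map, hx]
      exact ha'
    by_contra h
    exact this (Ideal.Quotient.eq_zero_iff_mem.2 ((IsLocalRing.mem_maximalIdeal _).2 h))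
  -- existence via the key lemma applied to g = f(X + a₀)
  set g : Polynomial A := f.comp (X + C a₀) with hg
  have hg0 : g.coeff 0 ∈ IsLocalRing.maximalIdeal A := by
    have hval : φ (g.coeff 0) = 0 := by
      rw [Polynomial.coeff_zero_eq_eval_zero, hg, eval_comp]
      simp only [eval_add, eval_X, eval_C, zero_add]
      rw [show φ (f.eval a₀) = (f.map φ).eval (φ a₀) by
        rw [Polynomial.eval_map, Polynomial.eval₂_at_apply]]
      exact ha
    exact Ideal.Quotient.eq_zero_iff_mem.1 hval
  have hg1 : IsUnit (g.coeff 1) := by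
    have h9 : g.coeff 1 = (derivative f).eval a₀ := by
      have h6 : (derivative g).coeff 0 = g.coeff 1 := by
        rw [Polynomial.coeff_derivative]; simp
      rw [← h6, Polynomial.coeff_zero_eq_eval_zero, hg, derivative_comp]
      simp [eval_comp]
    rw [h9]
    exact hder a₀ rfl
  obtain ⟨ε, hε, hεroot⟩ := hensel_key hHensel g hg0 hg1
  have hφε : φ ε = 0 := Ideal.Quotient.eq_zero_iff_mem.2 hε
  refine ⟨ε + a₀, ⟨?_, ?_⟩, ?_⟩
  · rw [hg, eval_comp] at hεroot
    simpa using hεroot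
  · rw [map_add, hφε, zero_add]
  · -- uniqueness
    rintro β ⟨hβroot, hβres⟩
    set α := ε + a₀ with hα
    have hφε : φ ε = 0 := Ideal.Quotient.eq_zero_iff_mem.2 hε
    have hαres : φ α = φ a₀ := by
      rw [hα, map_add, hφε, zero_add]
    have hαroot : f.eval α = 0 := by
      rw [hg, eval_comp] at hεroot
      simpa using hεroot
    set δ := β - α with hδdef
    have hδ : δ ∈ IsLocalRing.maximalIdeal A := by
      have hval : φ δ = 0 := by rw [hδdef, map_sub, hβres, hαres, sub_self]
      exact Ideal.Quotient.eq_zero_iff_mem.1 hval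
    obtain ⟨k, hk⟩ := f.binomExpansion α δ
    rw [show α + δ = β by rw [hδdef]; ring, hβroot, hαroot, zero_add] at hk
    have hu : IsUnit ((derivative f).eval α + k * δ) := by
      by_contra h
      have hmem : (derivative f).eval α + k * δ ∈ IsLocalRing.maximalIdeal A :=
        (IsLocalRing.mem_maximalIdeal _).2 h
      have : (derivative f).eval α ∈ IsLocalRing.maximalIdeal A := by
        have := Ideal.sub_mem _ hmem (Ideal.mul_mem_left _ k hδ)
        simpa using this
      exact this (hder α hαres)
    have hδ0 : δ = 0 := by
      have h7 : ((derivative f).eval α + k * δ) * δ = 0 := by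
        linear_combination -hk
      obtain ⟨v, hv⟩ := hu
      have := congrArg (fun x => (↑v⁻¹ : A) * x) h7
      simpa [← hv, ← mul_assoc] using this
    rw [← sub_eq_zero, ← hδdef]
    exact hδ0
end
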